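/- Let p ≥ 5 be a prime and n an even integer with (p-1) ∤ n. Then for all integers r ≥ 0, \sum_{k=1, p \nmid k}^{(p^r-1)/2} \frac{1}{k^n} \equiv 0 \pmod{p^r}. -/

import Mathlib

/-!
Every `k` prime to `p` is a unit of `ℤ_[p]`, so the sum lies in `ℤ_[p]` and it suffices to show
that it vanishes in `ZMod (p ^ r)`. There, as `n` is even and `u ↦ -u` swaps the halves
`{1, …, (p ^ r - 1) / 2}` and `{(p ^ r + 1) / 2, …, p ^ r - 1}`, twice the sum is the sum of
`u ^ (-n)` over all units `u`. Multiplying by a unit `w` permutes the units, so this full sum `S`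
satisfies `(w ^ (-n) - 1) * S = 0`; choosing `w` to lift a generator of the cyclic group
`(ZMod p)ˣ`, of order `p - 1 ∤ n`, makes `w ^ (-n) - 1` a unit, so `S = 0`. Finally `p` is odd
(for `p = 2`, `p - 1 = 1` divides `n`), so `2` is invertible.
-/

open Finset

section unitZPow

variable {M : Type*} [MonoidWithZero M]

open Classical in
/-- Integer powers of units, extended by `0` to non-units: this makes sense of `1 / k ^ n` in
`ℤ_[p]` and `ZMod (p ^ r)`, which have no `zpow`. -/
noncomputable def unitZPow (n : ℤ) (x : M) : M :=
  if h : IsUnit x then ↑(h.unit ^ n) else 0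

@[simp]
lemma unitZPow_unit (n : ℤ) (u : Mˣ) : unitZPow n (u : M) = ↑(u ^ n) := by
  rw [unitZPow, dif_pos u.isUnit, IsUnit.unit_of_val_units]

lemma unitZPow_of_not_isUnit (n : ℤ) {x : M} (hx : ¬IsUnit x) : unitZPow n x = 0 := by
  rw [unitZPow, dif_neg hx]

lemma map_unitZPow {N F : Type*} [MonoidWithZero N] [FunLike F M N] [MonoidHomClass F M N]
    (f : F) (n : ℤ) {x : M} (hx : IsUnit x) : f (unitZPow n x) = unitZPow n (f x) := by
  lift x to Mˣ using hx
  rw [unitZPow_unit, show f x = ↑(Units.map (f : M →* N) x) from rfl, unitZPow_unit,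
    ← map_zpow]
  rfl

lemma unitZPow_neg [HasDistribNeg M] {n : ℤ} (hn : Even n) (x : M) :
    unitZPow n (-x) = unitZPow n x := by
  by_cases hx : IsUnit x
  · lift x to Mˣ using hx
    rw [← Units.val_neg, unitZPow_unit, unitZPow_unit, hn.neg_zpow]
  · rw [unitZPow_of_not_isUnit n hx, unitZPow_of_not_isUnit n (by rwa [IsUnit.neg_iff])]

lemma unitZPow_eq_zpow {G : Type*} [GroupWithZero G] (n : ℤ) {x : G} (hx : x ≠ 0) :
    unitZPow n x = x ^ n := by
  lift x to Gˣ using hx.isUnit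
  rw [unitZPow_unit, Units.val_zpow_eq_zpow_val]

lemma sum_unitZPow_eq_sum_units {R : Type*} [Semiring R] [Fintype R] [Fintype Rˣ] (n : ℤ) :
    ∑ x : R, unitZPow n x = ∑ u : Rˣ, (↑(u ^ n) : R) :=
  (Fintype.sum_of_injective _ Units.val_injective _ _
    (fun _ hx => unitZPow_of_not_isUnit n fun hu => hx hu)
    (fun u => (unitZPow_unit n u).symm)).symm

end unitZPow

theorem sum_units_zpow_eq_zero {R : Type*} [CommRing R] [Fintype Rˣ] {n : ℤ} (w : Rˣ)
    (hw : IsUnit ((↑(w ^ n) : R) - 1)) : ∑ u : Rˣ, (↑(u ^ n) : R) = 0 := by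
  have hfix : (↑(w ^ n) : R) * ∑ u : Rˣ, (↑(u ^ n) : R) = ∑ u : Rˣ, (↑(u ^ n) : R) := by
    rw [mul_sum]
    exact Fintype.sum_equiv (Equiv.mulLeft w) _ _ (fun u => by simp [mul_zpow])
  exact hw.mul_right_eq_zero.mp (by rw [sub_mul, one_mul, hfix, sub_self])

namespace ZMod

theorem isUnit_of_isUnit_castHom_prime_pow {p r : ℕ} [Fact p.Prime] (hr : r ≠ 0)
    {x : ZMod (p ^ r)} (hx : IsUnit (castHom (dvd_pow_self p hr) (ZMod p) x)) : IsUnit x := by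
  have hp : p.Prime := Fact.out
  have : NeZero (p ^ r) := ⟨pow_ne_zero r hp.ne_zero⟩
  rw [← natCast_zmod_val x] at hx ⊢
  rw [map_natCast] at hx
  rw [isUnit_natCast_iff_not_dvd_pow hp (Nat.pos_of_ne_zero hr)]
  exact fun hdvd => hx.ne_zero ((natCast_eq_zero_iff _ _).mpr hdvd)

theorem exists_unit_isUnit_zpow_sub_one {p r : ℕ} [Fact p.Prime] (hr : r ≠ 0) {m : ℤ}
    (hm : ¬((p : ℤ) - 1) ∣ m) :
    ∃ w : (ZMod (p ^ r))ˣ, IsUnit ((↑(w ^ m) : ZMod (p ^ r)) - 1) := by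
  have hp : p.Prime := Fact.out
  have : NeZero (p ^ r) := ⟨pow_ne_zero r hp.ne_zero⟩
  obtain ⟨g, hg⟩ := IsCyclic.exists_ofOrder_eq_natCard (α := (ZMod p)ˣ)
  have hgm : g ^ m ≠ 1 := by
    rwa [Ne, ← orderOf_dvd_iff_zpow_eq_one, hg, Nat.card_eq_fintype_card, card_units,
      Nat.cast_sub hp.one_le, Nat.cast_one]
  obtain ⟨w, rfl⟩ := unitsMap_surjective (dvd_pow_self p hr) g
  refine ⟨w, isUnit_of_isUnit_castHom_prime_pow hr ?_⟩
  have hcast : castHom (dvd_pow_self p hr) (ZMod p) ↑(w ^ m)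
      = ↑(unitsMap (dvd_pow_self p hr) w ^ m) := by
    rw [← map_zpow]
    rfl
  rw [map_sub, map_one, hcast, isUnit_iff_ne_zero, sub_ne_zero]
  exact fun h => hgm (Units.ext h)

theorem sum_eq_two_nsmul_sum_Icc_half {N : ℕ} [NeZero N] (hN : Odd N) {A : Type*}
    [AddCommMonoid A] {f : ZMod N → A} (hf0 : f 0 = 0) (hf : ∀ x, f (-x) = f x) :
    ∑ x, f x = 2 • ∑ k ∈ Icc 1 ((N - 1) / 2), f k := by
  obtain ⟨M, hM⟩ := hN
  have hrange : ∑ x, f x = ∑ k ∈ range N, f k :=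
    sum_nbij' (fun x => x.val) (fun k => (k : ZMod N)) (fun x _ => mem_range.mpr x.val_lt)
      (fun _ _ => mem_univ _) (fun x _ => natCast_zmod_val x)
      (fun k hk => val_cast_of_lt (mem_range.mp hk)) (fun x _ => by rw [natCast_zmod_val])
  have hhalf : ∑ k ∈ Icc 1 ((N - 1) / 2), f k = ∑ i ∈ range M, f ↑(i + 1) := by
    rw [show Icc 1 ((N - 1) / 2) = Ico 1 (M + 1) by ext; simp; omega, sum_Ico_eq_sum_range]
    simp only [add_tsub_cancel_right, add_comm 1]
  have hreflect : ∑ i ∈ range M, f ↑(M + 1 + i) = ∑ i ∈ range M, f ↑(i + 1) := by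
    rw [← sum_range_reflect]
    refine sum_congr rfl fun i hi => ?_
    rw [← hf ((i + 1 : ℕ) : ZMod N)]
    congr 1
    rw [eq_neg_iff_add_eq_zero, ← Nat.cast_add, show M + 1 + (M - 1 - i) + (i + 1) = N by
      have := mem_range.mp hi; omega, natCast_self]
  rw [hrange, show range N = range (M + 1 + M) by rw [hM]; ring_nf, sum_range_add,
    sum_range_succ', hreflect, hhalf, Nat.cast_zero, hf0, add_zero, two_nsmul]

theorem sum_Icc_half_unitZPow_prime_pow_eq_zero {p r : ℕ} [Fact p.Prime] (hp2 : p ≠ 2)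
    (hr : r ≠ 0) {m : ℤ} (hme : Even m) (hm : ¬((p : ℤ) - 1) ∣ m) :
    ∑ k ∈ Icc 1 ((p ^ r - 1) / 2), unitZPow m (k : ZMod (p ^ r)) = 0 := by
  have hp : p.Prime := Fact.out
  have : Fact (1 < p ^ r) := ⟨Nat.one_lt_pow hr hp.one_lt⟩
  have hodd : Odd (p ^ r) := (hp.odd_of_ne_two hp2).pow
  have htwo : IsUnit (2 : ZMod (p ^ r)) := by
    simpa using (isUnit_iff_coprime 2 (p ^ r)).mpr (Nat.coprime_two_left.mpr hodd)
  obtain ⟨w, hw⟩ := exists_unit_isUnit_zpow_sub_one hr hm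
  have hsum := sum_eq_two_nsmul_sum_Icc_half hodd (unitZPow_of_not_isUnit m not_isUnit_zero)
    (unitZPow_neg hme)
  rw [sum_unitZPow_eq_sum_units, sum_units_zpow_eq_zero w hw, two_nsmul, ← two_mul] at hsum
  exact htwo.mul_right_eq_zero.mp hsum.symm

end ZMod

namespace PadicInt

variable {p : ℕ} [Fact p.Prime]

theorem norm_le_zpow_neg_iff_toZModPow_eq_zero (x : ℤ_[p]) (r : ℕ) :
    ‖x‖ ≤ (p : ℝ) ^ (-(r : ℤ)) ↔ toZModPow r x = 0 := by
  rw [norm_le_pow_iff_mem_span_pow, ← ker_toZModPow, RingHom.mem_ker]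

theorem isUnit_natCast_of_not_dvd {k : ℕ} (hk : ¬p ∣ k) : IsUnit (k : ℤ_[p]) :=
  isUnit_iff.mpr <| norm_natCast_eq_one_iff.mpr <| (Fact.out : p.Prime).coprime_iff_not_dvd.mpr hk

theorem coe_unitZPow_natCast (n : ℤ) {k : ℕ} (hk : ¬p ∣ k) :
    ((unitZPow n (k : ℤ_[p]) : ℤ_[p]) : ℚ_[p]) = (k : ℚ_[p]) ^ n := by
  have hk0 : (k : ℚ_[p]) ≠ 0 := Nat.cast_ne_zero.mpr (by rintro rfl; exact hk (dvd_zero p))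
  rw [show ((unitZPow n (k : ℤ_[p]) : ℤ_[p]) : ℚ_[p]) = Coe.ringHom (unitZPow n (k : ℤ_[p]))
      from rfl, map_unitZPow _ _ (isUnit_natCast_of_not_dvd hk), map_natCast,
    unitZPow_eq_zpow _ hk0]

theorem toZModPow_unitZPow_natCast (n : ℤ) {k : ℕ} (hk : ¬p ∣ k) (r : ℕ) :
    toZModPow r (unitZPow n (k : ℤ_[p])) = unitZPow n (k : ZMod (p ^ r)) := by
  rw [map_unitZPow _ _ (isUnit_natCast_of_not_dvd hk), map_natCast]

end PadicInt

theorem sum_inv_pow_half_range_congruence_general (p : ℕ) [Fact p.Prime]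
    (n : ℤ) (hne : Even n) (hn : ¬ ((p : ℤ) - 1) ∣ n) (r : ℕ) :
    ‖∑ k ∈ (Finset.Icc 1 ((p ^ r - 1) / 2)).filter (fun k => ¬ p ∣ k),
        (1 : ℚ_[p]) / ((k : ℚ_[p])) ^ n‖ ≤
      (p : ℝ) ^ (-(r : ℤ)) := by
  rcases eq_or_ne r 0 with rfl | hr
  · simp
  have hp : p.Prime := Fact.out
  have hp2 : p ≠ 2 := by rintro rfl; exact hn (by norm_num)
  set s := (Icc 1 ((p ^ r - 1) / 2)).filter (fun k => ¬ p ∣ k)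
  have hlift : ∑ k ∈ s, (1 : ℚ_[p]) / (k : ℚ_[p]) ^ n
      = ((∑ k ∈ s, unitZPow (-n) (k : ℤ_[p]) : ℤ_[p]) : ℚ_[p]) := by
    rw [PadicInt.coe_sum]
    exact sum_congr rfl fun k hk => by
      rw [PadicInt.coe_unitZPow_natCast _ (mem_filter.mp hk).2, zpow_neg, one_div]
  have hunfilter : ∑ k ∈ s, unitZPow (-n) (k : ZMod (p ^ r))
      = ∑ k ∈ Icc 1 ((p ^ r - 1) / 2), unitZPow (-n) (k : ZMod (p ^ r)) :=
    sum_filter_of_ne fun k _ hk =>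
      (ZMod.isUnit_natCast_iff_not_dvd_pow hp (Nat.pos_of_ne_zero hr)).mp
        (not_not.mp (mt (unitZPow_of_not_isUnit (-n)) hk))
  rw [hlift, ← PadicInt.norm_def, PadicInt.norm_le_zpow_neg_iff_toZModPow_eq_zero, map_sum,
    sum_congr rfl fun k hk => PadicInt.toZModPow_unitZPow_natCast _ (mem_filter.mp hk).2 r,
    hunfilter]
  exact ZMod.sum_Icc_half_unitZPow_prime_pow_eq_zero hp2 hr hne.neg (by rwa [dvd_neg])

theorem sum_inv_pow_half_range_congruence (p : ℕ) [Fact p.Prime] (hp5 : 5 ≤ p)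
    (n : ℤ) (hne : Even n) (hn : ¬ ((p : ℤ) - 1) ∣ n) (r : ℕ) :
    ‖∑ k ∈ (Finset.Icc 1 ((p ^ r - 1) / 2)).filter (fun k => ¬ p ∣ k),
        (1 : ℚ_[p]) / ((k : ℚ_[p])) ^ n‖ ≤
      (p : ℝ) ^ (-(r : ℤ)) :=
  sum_inv_pow_half_range_congruence_general p n hne hn r
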